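/- arXiv:1309.7901 — 6 statements merged into one kernel-verified Lean document; each statement's English description precedes it below -/
import Mathlib

section
/- Let F_q be a finite field, let x_0,…,x_{n−1} ∈ F_q be n distinct elements, let J ⊆ {0,…,n−1}, and let r ≤ ℓ be positive integers. Suppose y ∈ F_q^n satisfies y_i = 0 for all i ∈ J, and suppose the polynomials Q_0(x),…,Q_ℓ(x) ∈ F_q[x] with deg Q_ν ≤ d_ν satisfy the GSA interpolation constraints for y. Then for every ν with 0 ≤ ν ≤ r−1 there exists U_ν(x) ∈ F_q[x] with deg U_ν ≤ d_ν − |J|·(r−ν) such that Q_ν(x) = U_ν(x)·P_J(x)^{r−ν}. -/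
open Polynomial

/-- `f` has degree at most `d`, where `d` is an integer (so `d < 0` forces `f = 0`). -/
def DegLE {F : Type*} [Field F] (f : F[X]) (d : ℤ) : Prop :=
  ∀ μ : ℕ, d < (μ : ℤ) → f.coeff μ = 0

/-- The Guruswami–Sudan interpolation constraints: for all `i` and all `s, t` with
`s + t < r`, `Σ_{ν=t}^{ℓ} C(ν,t)·y_i^{ν−t}·Σ_{μ≥s} C(μ,s)·x_i^{μ−s}·Q_{ν,μ} = 0`,
the inner sum being the `s`-th Hasse derivative of `Q ν` evaluated at `x i`. -/
def GSAConstraints {F : Type*} [Field F] {n : ℕ} (x y : Fin n → F)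
    (r ℓ : ℕ) (Q : ℕ → F[X]) : Prop :=
  ∀ i : Fin n, ∀ s t : ℕ, s + t < r →
    ∑ ν ∈ Finset.Icc t ℓ,
      (Nat.choose ν t : F) * y i ^ (ν - t) *
        ((Polynomial.hasseDeriv s (Q ν)).eval (x i)) = 0

/-- `P_S(x) = ∏_{i ∈ S} (x − x_i)`. -/
noncomputable def Ppoly {F : Type*} [Field F] {n : ℕ} (x : Fin n → F)
    (S : Finset (Fin n)) : F[X] :=
  ∏ i ∈ S, (X - C (x i))

/-- The degree bound `d_ν = r(n−ε₀) − ν(k−1) − 1` (as an integer). -/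
def degBound (r n ε₀ k ν : ℕ) : ℤ :=
  (r : ℤ) * ((n : ℤ) - (ε₀ : ℤ)) - (ν : ℤ) * ((k : ℤ) - 1) - 1

lemma dvd_of_hasseDeriv_eval_zero {F : Type*} [Field F] (f : F[X]) (a : F) (m : ℕ)
    (h : ∀ s < m, (Polynomial.hasseDeriv s f).eval a = 0) : (X - C a) ^ m ∣ f := by
  have key : ∀ i ∈ (Polynomial.taylor a f).support,
      (X - C a) ^ m ∣ C ((Polynomial.taylor a f).coeff i) * (X - C a) ^ i := by
    intro i hi
    have him : m ≤ i := by
      by_contra hlt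
      push_neg at hlt
      have ht : (Polynomial.taylor a f).coeff i = (Polynomial.hasseDeriv i f).eval a :=
        Polynomial.taylor_coeff a f i
      rw [h i hlt] at ht
      exact Polynomial.mem_support_iff.mp hi ht
    exact Dvd.dvd.mul_left (pow_dvd_pow _ him) _
  have hsum := Polynomial.sum_taylor_eq f a
  rw [← hsum, Polynomial.sum_def]
  exact Finset.dvd_sum key

/-- re-encoding prefactors: if `y` vanishes on `J` and the `Q ν` satisfy
the GSA interpolation constraints with the degree bounds `d_ν`, then for every `ν < r`
there is `U ν` of degree at most `d_ν − |J|(r−ν)` with `Q ν = U ν · P_J ^ (r−ν)`. -/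
theorem reencoding_prefactors {F : Type*} [Field F] [Fintype F] {n : ℕ}
    (x : Fin n → F) (hx : Function.Injective x)
    (J : Finset (Fin n)) (r ℓ k ε₀ : ℕ) (hr : 0 < r) (hrℓ : r ≤ ℓ)
    (y : Fin n → F) (hy : ∀ i ∈ J, y i = 0)
    (Q : ℕ → F[X])
    (hdeg : ∀ ν ≤ ℓ, DegLE (Q ν) (degBound r n ε₀ k ν))
    (hGSA : GSAConstraints x y r ℓ Q) :
    ∀ ν < r, ∃ U : F[X],
      DegLE U (degBound r n ε₀ k ν - (J.card : ℤ) * ((r : ℤ) - (ν : ℤ))) ∧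
      Q ν = U * (Ppoly x J) ^ (r - ν) := by
  intro ν hν
  -- Each (X - C (x i))^(r-ν) divides Q ν for i ∈ J
  have hdvd1 : ∀ i ∈ J, (X - C (x i)) ^ (r - ν) ∣ Q ν := by
    intro i hi
    apply dvd_of_hasseDeriv_eval_zero
    intro s hs
    have hcon := hGSA i s ν (by omega)
    rw [Finset.sum_eq_single ν] at hcon
    · simpa using hcon
    · intro b hb hbne
      rw [hy i hi, zero_pow (by
        rw [Finset.mem_Icc] at hb
        omega), mul_zero, zero_mul]
    · intro hmem
      exact absurd (Finset.mem_Icc.mpr ⟨le_refl _, le_trans hν.le hrℓ⟩) hmem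
  have hdvd : (Ppoly x J) ^ (r - ν) ∣ Q ν := by
    rw [Ppoly, ← Finset.prod_pow]
    refine Finset.prod_dvd_of_coprime ?_ hdvd1
    intro a _ b _ hab
    exact ((Polynomial.pairwise_coprime_X_sub_C hx) hab).pow
  obtain ⟨U, hU⟩ := hdvd
  refine ⟨U, ?_, by rw [hU, mul_comm]⟩
  -- Degree bound
  by_cases hU0 : U = 0
  · intro μ _
    simp [hU0]
  · have hP : (Ppoly x J).Monic := monic_prod_of_monic _ _ fun i _ => monic_X_sub_C (x i)
    have hPpow : ((Ppoly x J) ^ (r - ν)).Monic := hP.pow _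
    have hQ0 : Q ν ≠ 0 := by
      rw [hU]
      exact mul_ne_zero hPpow.ne_zero hU0
    have hdegP : (Ppoly x J).natDegree = J.card := by
      rw [Ppoly, natDegree_prod _ _ fun i _ => X_sub_C_ne_zero (x i)]
      simp
    have hdegQ : (Q ν).natDegree = J.card * (r - ν) + U.natDegree := by
      rw [hU, natDegree_mul hPpow.ne_zero hU0, natDegree_pow, hdegP, mul_comm]
    have hQle : ((Q ν).natDegree : ℤ) ≤ degBound r n ε₀ k ν := by
      by_contra hlt
      push_neg at hlt
      exact hQ0 (leadingCoeff_eq_zero.mp (hdeg ν (le_trans hν.le hrℓ) _ hlt))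
    intro μ hμ
    apply coeff_eq_zero_of_natDegree_lt
    have hc : ((r - ν : ℕ) : ℤ) = (r : ℤ) - (ν : ℤ) := by omega
    have : (U.natDegree : ℤ) < (μ : ℤ) := by
      rw [hdegQ] at hQle
      push_cast at hQle
      rw [hc] at hQle
      linarith
    exact_mod_cast this
end

section
/- Let F_q be a finite field of characteristic p, let x_0,…,x_{n−1} ∈ F_q be n distinct elements, let r ≤ ℓ be positive integers, and let t_0 < r be a zero column of the mod-p Pascal triangle with respect to ℓ. If the polynomials Q_0(x),…,Q_ℓ(x) ∈ F_q[x] with deg Q_ν ≤ d_ν satisfy the GSA interpolation constraints for some y ∈ F_q^n, then there exists V_{t_0}(x) ∈ F_q[x] with deg V_{t_0} ≤ d_{t_0} − n(r−t_0) such that Q_{t_0}(x) = V_{t_0}(x)·P_I(x)^{r−t_0}, where I = {0,…,n−1}. -/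
open Polynomial

/-- `t0` is a zero column of the mod-`p` Pascal triangle with respect to `ℓ`:
`C(ν, t0) ≡ 0 (mod p)` for all `ν = t0+1, …, ℓ`. -/
def ZeroColumn (p ℓ t0 : ℕ) : Prop :=
  ∀ ν : ℕ, t0 < ν → ν ≤ ℓ → p ∣ Nat.choose ν t0


lemma pow_X_sub_C_dvd_of_hasse {F : Type*} [Field F] (f : F[X]) (a : F) (m : ℕ)
    (h : ∀ s < m, (hasseDeriv s f).eval a = 0) : (X - C a) ^ m ∣ f := by
  have hX : (X : F[X]) ^ m ∣ taylor a f := by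
    rw [X_pow_dvd_iff]
    intro k hk
    rw [taylor_coeff]
    exact h k hk
  obtain ⟨g, hg⟩ := hX
  have hf : f = (taylor a f).comp (X - C a) := by
    rw [taylor_apply, comp_assoc]
    simp
  rw [hf, hg, mul_comp, X_pow_comp]
  exact dvd_mul_right _ _

/-- Sierpinski prefactor at a zero column: if `t0 < r` is a zero column
with respect to `ℓ` and the `Q ν` satisfy the GSA interpolation constraints for some `y`,
then `Q t0 = V · P_I ^ (r − t0)` with `deg V ≤ d_{t0} − n(r − t0)`. -/
theorem sierpinski_prefactor_zero_column {F : Type*} [Field F] [Fintype F]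
    {p : ℕ} (hp : p.Prime) [CharP F p] {n : ℕ}
    (x : Fin n → F) (hx : Function.Injective x)
    (r ℓ k ε₀ : ℕ) (hr : 0 < r) (hrℓ : r ≤ ℓ)
    (t0 : ℕ) (ht0r : t0 < r) (ht0 : ZeroColumn p ℓ t0)
    (y : Fin n → F) (Q : ℕ → F[X])
    (hdeg : ∀ ν ≤ ℓ, DegLE (Q ν) (degBound r n ε₀ k ν))
    (hGSA : GSAConstraints x y r ℓ Q) :
    ∃ V : F[X],
      DegLE V (degBound r n ε₀ k t0 - (n : ℤ) * ((r : ℤ) - (t0 : ℤ))) ∧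
      Q t0 = V * (Ppoly x Finset.univ) ^ (r - t0) := by
  
  set m := r - t0 with hm
  have key : ∀ i : Fin n, ∀ s < m, (hasseDeriv s (Q t0)).eval (x i) = 0 := by
    intro i s hs
    have hst : s + t0 < r := by omega
    have h := hGSA i s t0 hst
    rw [Finset.sum_eq_single t0] at h
    · simpa using h
    · intro ν hν hne
      simp only [Finset.mem_Icc] at hν
      have : (Nat.choose ν t0 : F) = 0 := by
        rw [CharP.cast_eq_zero_iff F p]
        exact ht0 ν (lt_of_le_of_ne hν.1 (Ne.symm hne)) hν.2
      simp [this]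
    · intro habs
      exact absurd (Finset.mem_Icc.mpr ⟨le_refl _, le_trans (le_of_lt ht0r) hrℓ⟩) habs
  have hdvd : (∏ i ∈ (Finset.univ : Finset (Fin n)), (X - C (x i)) ^ m) ∣ Q t0 := by
    apply Finset.prod_dvd_of_coprime
    · intro i _ j _ hij
      exact ((Polynomial.pairwise_coprime_X_sub_C hx hij).pow)
    · intro i _
      exact pow_X_sub_C_dvd_of_hasse _ _ _ (key i)
  rw [Finset.prod_pow] at hdvd
  obtain ⟨V, hV⟩ := hdvd
  refine ⟨V, ?_, by rw [Ppoly, hV, mul_comm]⟩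
  by_cases hV0 : V = 0
  · intro μ _
    simp [hV0]
  intro μ hμ
  have hPm : ((∏ i ∈ (Finset.univ : Finset (Fin n)), (X - C (x i))) ^ m).Monic :=
    (monic_prod_of_monic _ _ fun i _ => monic_X_sub_C _).pow _
  have hQ0 : Q t0 ≠ 0 := by
    rw [hV]
    exact mul_ne_zero hPm.ne_zero hV0
  have hPdeg : ((∏ i ∈ (Finset.univ : Finset (Fin n)), (X - C (x i))) ^ m).natDegree
      = n * m := by
    rw [natDegree_pow, natDegree_prod _ _ (fun i _ => X_sub_C_ne_zero _)]
    simp [mul_comm]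
  have hnd : (Q t0).natDegree = n * m + V.natDegree := by
    rw [hV, natDegree_mul hPm.ne_zero hV0, hPdeg]
  have hQd : ((Q t0).natDegree : ℤ) ≤ degBound r n ε₀ k t0 := by
    by_contra hc
    push_neg at hc
    exact (leadingCoeff_ne_zero.mpr hQ0)
      (hdeg t0 (le_trans (le_of_lt ht0r) hrℓ) _ hc)
  apply coeff_eq_zero_of_natDegree_lt
  have hcast : ((n * m : ℕ) : ℤ) = (n : ℤ) * ((r : ℤ) - (t0 : ℤ)) := by
    push_cast [hm, Nat.cast_sub (le_of_lt ht0r)]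
    ring
  have hfin : (V.natDegree : ℤ) < (μ : ℤ) := by
    have h1 := hnd ▸ hQd
    unfold degBound at h1 hμ
    push_cast at h1 hμ ⊢
    omega
  exact_mod_cast hfin
end

section
/- Let F_q be a finite field of characteristic p, let x_0,…,x_{n−1} ∈ F_q be n distinct elements, let r ≤ ℓ be positive integers, let t_0 < r be a zero column of the mod-p Pascal triangle with respect to ℓ, and let t_1 < t_0 be such that C(t_0,t_1) ≢ 0 (mod p) while C(ν,t_1) ≡ 0 (mod p) for all ν with t_1 < ν ≤ ℓ and ν ≠ t_0. If the polynomials Q_0(x),…,Q_ℓ(x) ∈ F_q[x] with deg Q_ν ≤ d_ν satisfy the GSA interpolation constraints for some y ∈ F_q^n, then there exists V_{t_1}(x) ∈ F_q[x] with deg V_{t_1} ≤ d_{t_1} − n(r−t_0) such that Q_{t_1}(x) = V_{t_1}(x)·P_I(x)^{r−t_0}, where I = {0,…,n−1}. -/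
open Polynomial

lemma X_sub_C_pow_dvd_of_hasseDeriv {F : Type*} [Field F] (f : F[X]) (a : F) (N : ℕ)
    (h : ∀ s < N, (hasseDeriv s f).eval a = 0) : (X - C a) ^ N ∣ f := by
  have hX : X ^ N ∣ (taylor a f : F[X]) := by
    rw [Polynomial.X_pow_dvd_iff]
    intro d hd
    rw [Polynomial.taylor_coeff]
    exact h d hd
  obtain ⟨g, hg⟩ := hX
  refine ⟨g.comp (X - C a), ?_⟩
  have := congrArg (fun q : F[X] => q.comp (X - C a)) hg
  simpa [taylor_apply, comp_assoc, mul_comp, pow_comp] using this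

/-- Sierpinski prefactor at a zero column with a single resolvable
spoiler: if `t0 < r` is a zero column with respect to `ℓ`, and `t1 < t0` has
`C(t0,t1) ≢ 0 (mod p)` while `C(ν,t1) ≡ 0 (mod p)` for all `t1 < ν ≤ ℓ`, `ν ≠ t0`,
then `Q t1 = V · P_I ^ (r − t0)` with `deg V ≤ d_{t1} − n(r − t0)`. -/
theorem sierpinski_prefactor_resolvable_spoiler {F : Type*} [Field F] [Fintype F]
    {p : ℕ} (hp : p.Prime) [CharP F p] {n : ℕ}
    (x : Fin n → F) (hx : Function.Injective x)
    (r ℓ k ε₀ : ℕ) (hr : 0 < r) (hrℓ : r ≤ ℓ)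
    (t0 : ℕ) (ht0r : t0 < r) (ht0 : ZeroColumn p ℓ t0)
    (t1 : ℕ) (ht1 : t1 < t0)
    (hspoiler : ¬ (p ∣ Nat.choose t0 t1))
    (hzero : ∀ ν : ℕ, t1 < ν → ν ≤ ℓ → ν ≠ t0 → p ∣ Nat.choose ν t1)
    (y : Fin n → F) (Q : ℕ → F[X])
    (hdeg : ∀ ν ≤ ℓ, DegLE (Q ν) (degBound r n ε₀ k ν))
    (hGSA : GSAConstraints x y r ℓ Q) :
    ∃ V : F[X],
      DegLE V (degBound r n ε₀ k t1 - (n : ℤ) * ((r : ℤ) - (t0 : ℤ))) ∧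
      Q t1 = V * (Ppoly x Finset.univ) ^ (r - t0) := by
  set m := r - t0 with hm
  -- Step 1: Hasse derivatives of Q t0 vanish at each x i for s < m
  have step1 : ∀ i : Fin n, ∀ s < m, (hasseDeriv s (Q t0)).eval (x i) = 0 := by
    intro i s hs
    have hsum := hGSA i s t0 (by omega)
    rw [Finset.sum_eq_single_of_mem t0 (Finset.mem_Icc.mpr ⟨le_refl _, by omega⟩)] at hsum
    · simpa using hsum
    · intro b hb hbne
      rw [Finset.mem_Icc] at hb
      have : (Nat.choose b t0 : F) = 0 := by
        rw [CharP.cast_eq_zero_iff F p]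
        exact ht0 b (by omega) hb.2
      simp [this]
  -- Step 2: Hasse derivatives of Q t1 vanish at each x i for s < m
  have step2 : ∀ i : Fin n, ∀ s < m, (hasseDeriv s (Q t1)).eval (x i) = 0 := by
    intro i s hs
    have hsum := hGSA i s t1 (by omega)
    rw [Finset.sum_eq_single_of_mem t1 (Finset.mem_Icc.mpr ⟨le_refl _, by omega⟩)] at hsum
    · simpa using hsum
    · intro b hb hbne
      rw [Finset.mem_Icc] at hb
      rcases eq_or_ne b t0 with rfl | hb0
      · rw [step1 i s hs, mul_zero]
      · have : (Nat.choose b t1 : F) = 0 := by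
          rw [CharP.cast_eq_zero_iff F p]
          exact hzero b (by omega) hb.2 hb0
        simp [this]
  -- Step 3: divisibility
  have hdvd : (Ppoly x Finset.univ) ^ m ∣ Q t1 := by
    rw [Ppoly, ← Finset.prod_pow]
    apply Finset.prod_dvd_of_coprime
    · intro i _ j _ hij
      exact (Polynomial.pairwise_coprime_X_sub_C hx hij).pow
    · intro i _
      exact X_sub_C_pow_dvd_of_hasseDeriv _ _ _ (step2 i)
  obtain ⟨V, hV⟩ := hdvd
  refine ⟨V, ?_, by rw [hV, mul_comm]⟩
  -- degree bound
  have hPmon : ((Ppoly x Finset.univ) ^ m).Monic := by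
    unfold Ppoly
    exact (monic_prod_of_monic _ _ fun i _ => monic_X_sub_C (x i)).pow m
  have hPdeg : ((Ppoly x Finset.univ) ^ m).natDegree = m * n := by
    rw [natDegree_pow, Ppoly, natDegree_prod _ _ (fun i _ => X_sub_C_ne_zero (x i))]
    simp
  intro μ hμ
  by_contra hc
  have hVne : V ≠ 0 := fun h => hc (by simp [h])
  have hμle : (μ : ℤ) ≤ V.natDegree := by
    exact_mod_cast le_natDegree_of_ne_zero hc
  have hQdeg : (Q t1).natDegree = m * n + V.natDegree := by
    rw [hV, natDegree_mul hPmon.ne_zero hVne, hPdeg]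
  have hQne : Q t1 ≠ 0 := by
    rw [hV]; exact mul_ne_zero (hPmon.ne_zero) hVne
  have hbound : ((Q t1).natDegree : ℤ) ≤ degBound r n ε₀ k t1 := by
    by_contra hb
    have := hdeg t1 (by omega) (Q t1).natDegree (lt_of_not_ge hb)
    rw [coeff_natDegree] at this
    exact hQne (leadingCoeff_eq_zero.mp this)
  have hmz : (m : ℤ) = (r : ℤ) - (t0 : ℤ) := by
    rw [hm]; push_cast [Nat.cast_sub (le_of_lt ht0r)]; ring
  rw [hQdeg] at hbound
  push_cast at hbound
  have : (μ : ℤ) ≤ degBound r n ε₀ k t1 - (n : ℤ) * ((r : ℤ) - (t0 : ℤ)) := by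
    rw [← hmz]; linarith
  omega
end

section
/- Let F_q be a finite field of characteristic p, let x_0,…,x_{n−1} ∈ F_q be n distinct elements, and let r ≤ ℓ be positive integers. If the polynomials Q_0(x),…,Q_ℓ(x) ∈ F_q[x] with deg Q_ν ≤ d_ν satisfy the GSA interpolation constraints for some y ∈ F_q^n, then for every ν ∈ R_0 (the set of zero columns with resolvable spoilers of the mod-p Pascal triangle with respect to ℓ) there exists V_ν(x) ∈ F_q[x] with deg V_ν ≤ d_ν − n(r−g(ν)) such that Q_ν(x) = V_ν(x)·P_I(x)^{r−g(ν)}, where I = {0,…,n−1}. -/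
open Polynomial

/-- `ν` is a zero column with resolvable spoilers of the mod-`p` Pascal triangle with
respect to `r` and `ℓ`: `ν < r` and every spoiler `t` of `ν` (i.e. `ν < t ≤ ℓ` with
`C(t,ν) ≢ 0 (mod p)`) is itself a zero column with resolvable spoilers.  A zero column
(with `t0 < r`) has no spoilers and is the base case of the recursion; if no zero column
exists, no column satisfies this predicate. -/
def ZCRS (p r ℓ : ℕ) (ν : ℕ) : Prop :=
  ν < r ∧ ∀ t, ν < t → t ≤ ℓ → ¬ (p ∣ Nat.choose t ν) → ZCRS p r ℓ t
termination_by ℓ - ν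
decreasing_by omega

/-- The set `S_ν` of spoilers of column `ν`: those `t` with `ν < t ≤ ℓ` and
`C(t,ν) ≢ 0 (mod p)`. -/
def spoilerSet (p ℓ ν : ℕ) : Finset ℕ :=
  (Finset.Icc (ν + 1) ℓ).filter fun t => ¬ (p ∣ Nat.choose t ν)

/-- `g(ν) = max S_ν` if `S_ν ≠ ∅`, and `g(ν) = ν` otherwise. -/
def gval (p ℓ ν : ℕ) : ℕ :=
  if h : (spoilerSet p ℓ ν).Nonempty then (spoilerSet p ℓ ν).max' h else ν

/-!
Fix `x_i` and expand the constraint for `(s, t) = (s, ν)`. Every term with `t > ν` either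
carries a factor `C(t, ν) ≡ 0 (mod p)` or comes from a spoiler `t` of `ν`. A spoiler is again
a zero column with resolvable spoilers, and since `C(u,t)·C(t,ν) = C(u,ν)·C(u−ν,t−ν)`, a
spoiler of a spoiler of `ν` is a spoiler of `ν`, so `g(t) ≤ g(ν)`. By downward induction on the
column, `Q t` then vanishes to order `r - g(t) ≥ r - g(ν)` at `x_i`, and the constraint reduces
to the vanishing of the `s`-th Hasse derivative of `Q ν` at `x_i` for all `s < r - g(ν)`, i.e.
`(X - x_i)^(r - g(ν)) ∣ Q ν`. The factors for distinct `x_i` are coprime, and the degree bound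
on the cofactor holds because `P_I` is monic of degree `n`.
-/

namespace Polynomial

theorem X_sub_C_pow_dvd_iff_hasseDeriv_eval_eq_zero {R : Type*} [CommRing R] (a : R) (m : ℕ)
    (f : R[X]) : (X - C a) ^ m ∣ f ↔ ∀ s < m, (hasseDeriv s f).eval a = 0 := by
  have h : taylor a (X - C a) = X := by simp [taylor_X, taylor_C]
  rw [← map_dvd_iff (taylorEquiv a), map_pow]
  change taylor a (X - C a) ^ m ∣ taylor a f ↔ _
  simp only [h, X_pow_dvd_iff, taylor_coeff]

end Polynomial

section Ppoly

variable {F : Type*} [Field F] {n : ℕ} (x : Fin n → F)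

theorem monic_Ppoly (S : Finset (Fin n)) : (Ppoly x S).Monic :=
  monic_prod_of_monic _ _ fun i _ => monic_X_sub_C (x i)

theorem natDegree_Ppoly (S : Finset (Fin n)) : (Ppoly x S).natDegree = S.card := by
  simp [Ppoly, natDegree_prod_of_monic _ _ fun i _ => monic_X_sub_C (x i)]

variable {x}

theorem Ppoly_pow_dvd_of_forall_X_sub_C_pow_dvd (hx : Function.Injective x)
    {S : Finset (Fin n)} {m : ℕ} {f : F[X]} (h : ∀ i ∈ S, (X - C (x i)) ^ m ∣ f) :
    Ppoly x S ^ m ∣ f := by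
  rw [Ppoly, ← Finset.prod_pow]
  exact Finset.prod_dvd_of_coprime
    (fun i _ j _ hij => (pairwise_coprime_X_sub_C hx hij).pow) h

end Ppoly

theorem DegLE.of_mul_monic {F : Type*} [Field F] {g f : F[X]} {d : ℤ} (hf : f.Monic)
    (h : DegLE (g * f) d) : DegLE g (d - f.natDegree) := by
  intro μ hμ
  by_contra hc
  have hμg : μ ≤ g.natDegree := le_natDegree_of_ne_zero hc
  have hlead : (g * f).coeff (g.natDegree + f.natDegree) ≠ 0 := by
    rw [coeff_mul_degree_add_degree, hf.leadingCoeff, mul_one, Ne, leadingCoeff_eq_zero]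
    rintro rfl
    exact hc (coeff_zero μ)
  exact hlead (h _ (by push_cast; omega))

theorem Nat.Prime.not_dvd_choose_trans {p ν t u : ℕ} (hp : p.Prime) (hνt : ν ≤ t)
    (hut : ¬ p ∣ u.choose t) (htν : ¬ p ∣ t.choose ν) : ¬ p ∣ u.choose ν := by
  intro hd
  have hprod : p ∣ u.choose t * t.choose ν := by
    rw [Nat.choose_mul hνt]
    exact hd.mul_right _
  exact (hp.dvd_mul.mp hprod).elim hut htν

section Spoilers

variable {p r ℓ ν t : ℕ}

@[simp]
theorem mem_spoilerSet : t ∈ spoilerSet p ℓ ν ↔ ν < t ∧ t ≤ ℓ ∧ ¬ p ∣ t.choose ν := by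
  simp only [spoilerSet, Finset.mem_filter, Finset.mem_Icc, and_assoc, Nat.add_one_le_iff]

theorem le_gval (p ℓ ν : ℕ) : ν ≤ gval p ℓ ν := by
  unfold gval
  split_ifs with h
  · exact (mem_spoilerSet.mp ((spoilerSet p ℓ ν).max'_mem h)).1.le
  · exact le_rfl

theorem le_gval_of_mem_spoilerSet (ht : t ∈ spoilerSet p ℓ ν) : t ≤ gval p ℓ ν := by
  rw [gval, dif_pos ⟨t, ht⟩]
  exact Finset.le_max' _ t ht

theorem gval_le_gval_of_mem_spoilerSet (hp : p.Prime) (ht : t ∈ spoilerSet p ℓ ν) :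
    gval p ℓ t ≤ gval p ℓ ν := by
  rw [gval]
  split_ifs with h
  · obtain ⟨hνt, -, htν⟩ := mem_spoilerSet.mp ht
    obtain ⟨htu, huℓ, hut⟩ := mem_spoilerSet.mp ((spoilerSet p ℓ t).max'_mem h)
    exact le_gval_of_mem_spoilerSet
      (mem_spoilerSet.mpr ⟨hνt.trans htu, huℓ, hp.not_dvd_choose_trans hνt.le hut htν⟩)
  · exact le_gval_of_mem_spoilerSet ht

theorem ZCRS_iff : ZCRS p r ℓ ν ↔ ν < r ∧ ∀ t ∈ spoilerSet p ℓ ν, ZCRS p r ℓ t := by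
  rw [ZCRS]
  simp only [mem_spoilerSet, and_imp]

theorem ZCRS.lt (h : ZCRS p r ℓ ν) : ν < r :=
  (ZCRS_iff.mp h).1

theorem ZCRS.of_mem_spoilerSet (h : ZCRS p r ℓ ν) (ht : t ∈ spoilerSet p ℓ ν) :
    ZCRS p r ℓ t :=
  (ZCRS_iff.mp h).2 t ht

theorem ZCRS.gval_lt (h : ZCRS p r ℓ ν) : gval p ℓ ν < r := by
  unfold gval
  split_ifs with hne
  · exact (h.of_mem_spoilerSet ((spoilerSet p ℓ ν).max'_mem hne)).lt
  · exact h.lt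

end Spoilers

theorem ZCRS.X_sub_C_pow_dvd {F : Type*} [Field F] {p : ℕ} (hp : p.Prime) [CharP F p] {n : ℕ}
    {x y : Fin n → F} {r ℓ : ℕ} (hrℓ : r ≤ ℓ) {Q : ℕ → F[X]} (hGSA : GSAConstraints x y r ℓ Q)
    (i : Fin n) {ν : ℕ} (hZ : ZCRS p r ℓ ν) : (X - C (x i)) ^ (r - gval p ℓ ν) ∣ Q ν := by
  have hνg := le_gval p ℓ ν
  rw [X_sub_C_pow_dvd_iff_hasseDeriv_eval_eq_zero]
  intro s hs
  have hsum := hGSA i s ν (by omega)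
  have hother : ∀ t ∈ Finset.Icc ν ℓ, t ≠ ν →
      (t.choose ν : F) * y i ^ (t - ν) * (hasseDeriv s (Q t)).eval (x i) = 0 := by
    intro t ht htν
    obtain ⟨hνt, htℓ⟩ := Finset.mem_Icc.mp ht
    by_cases hd : p ∣ t.choose ν
    · rw [(CharP.cast_eq_zero_iff F p _).mpr hd, zero_mul, zero_mul]
    have hts : t ∈ spoilerSet p ℓ ν := mem_spoilerSet.mpr ⟨by omega, htℓ, hd⟩
    have hgt := gval_le_gval_of_mem_spoilerSet hp hts
    have hdvd := (hZ.of_mem_spoilerSet hts).X_sub_C_pow_dvd hp hrℓ hGSA i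
    rw [X_sub_C_pow_dvd_iff_hasseDeriv_eval_eq_zero] at hdvd
    rw [hdvd s (by omega), mul_zero]
  have hνℓ : ν ∈ Finset.Icc ν ℓ := Finset.mem_Icc.mpr ⟨le_rfl, hZ.lt.le.trans hrℓ⟩
  simpa using (Finset.sum_eq_single_of_mem ν hνℓ hother).symm.trans hsum
termination_by ℓ - ν
decreasing_by omega

theorem sierpinski_prefactors_general {F : Type*} [Field F]
    {p : ℕ} (hp : p.Prime) [CharP F p] {n : ℕ}
    (x : Fin n → F) (hx : Function.Injective x)
    (r ℓ k ε₀ : ℕ) (hrℓ : r ≤ ℓ)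
    (y : Fin n → F) (Q : ℕ → F[X])
    (hdeg : ∀ ν ≤ ℓ, DegLE (Q ν) (degBound r n ε₀ k ν))
    (hGSA : GSAConstraints x y r ℓ Q) :
    ∀ ν, ZCRS p r ℓ ν → ∃ V : F[X],
      DegLE V (degBound r n ε₀ k ν - (n : ℤ) * ((r : ℤ) - (gval p ℓ ν : ℤ))) ∧
      Q ν = V * (Ppoly x Finset.univ) ^ (r - gval p ℓ ν) := by
  intro ν hZ
  obtain ⟨V, hV⟩ := Ppoly_pow_dvd_of_forall_X_sub_C_pow_dvd hx
    fun i (_ : i ∈ Finset.univ) => hZ.X_sub_C_pow_dvd hp hrℓ hGSA i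
  rw [mul_comm] at hV
  refine ⟨V, ?_, hV⟩
  have hmonic := (monic_Ppoly x Finset.univ).pow (r - gval p ℓ ν)
  have hVdeg := (hV ▸ hdeg ν (hZ.lt.le.trans hrℓ)).of_mul_monic hmonic
  rwa [(monic_Ppoly x _).natDegree_pow, natDegree_Ppoly, Finset.card_univ, Fintype.card_fin,
    Nat.cast_mul, Nat.cast_sub hZ.gval_lt.le, mul_comm] at hVdeg

/-- Sierpinski prefactors: if the `Q ν` satisfy the GSA interpolation
constraints with degree bounds `d_ν`, then for every zero column with resolvable
spoilers `ν`, `Q ν = V · P_I ^ (r − g(ν))` with `deg V ≤ d_ν − n(r − g(ν))`. -/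
theorem sierpinski_prefactors {F : Type*} [Field F] [Fintype F]
    {p : ℕ} (hp : p.Prime) [CharP F p] {n : ℕ}
    (x : Fin n → F) (hx : Function.Injective x)
    (r ℓ k ε₀ : ℕ) (hr : 0 < r) (hrℓ : r ≤ ℓ)
    (y : Fin n → F) (Q : ℕ → F[X])
    (hdeg : ∀ ν ≤ ℓ, DegLE (Q ν) (degBound r n ε₀ k ν))
    (hGSA : GSAConstraints x y r ℓ Q) :
    ∀ ν, ZCRS p r ℓ ν → ∃ V : F[X],
      DegLE V (degBound r n ε₀ k ν - (n : ℤ) * ((r : ℤ) - (gval p ℓ ν : ℤ))) ∧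
      Q ν = V * (Ppoly x Finset.univ) ^ (r - gval p ℓ ν) :=
  sierpinski_prefactors_general hp x hx r ℓ k ε₀ hrℓ y Q hdeg hGSA
end

section
/- Let p be a prime and let r, ℓ be positive integers with r ≤ ℓ. If there exist a ∈ {1,…,p−1} and j ∈ ℕ such that r ≤ a·p^j − 1 ≤ ℓ, then no zero column of the mod-p Pascal triangle with respect to ℓ exists; that is, for every natural number t < r there exists ν with t < ν ≤ ℓ and C(ν, t) ≢ 0 (mod p). -/
private lemma div_mod_aux {b q : ℕ} (hb : 1 ≤ b) (hq : 1 ≤ q) :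
    (b * q - 1) / q = b - 1 ∧ (b * q - 1) % q = q - 1 := by
  obtain ⟨b', rfl⟩ : ∃ b', b = b' + 1 := ⟨b - 1, by omega⟩
  have hbq : (b' + 1) * q - 1 = b' * q + (q - 1) := by
    rw [Nat.succ_mul]; omega
  constructor
  · rw [hbq, mul_comm, Nat.mul_add_div (by omega), Nat.div_eq_of_lt (by omega)]
    omega
  · rw [hbq, mul_comm, Nat.mul_add_mod, Nat.mod_eq_of_lt (by omega)]

private lemma not_dvd_choose_of_lt {p n k : ℕ} (hp : p.Prime) (hn : n < p) (hk : k ≤ n) :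
    ¬ p ∣ Nat.choose n k := by
  intro hdvd
  have h1 : p ∣ n.factorial := by
    rw [← Nat.choose_mul_factorial_mul_factorial hk]
    exact (hdvd.mul_right k.factorial).mul_right _
  exact absurd ((Nat.Prime.dvd_factorial hp).mp h1) (by omega)

/-- if there exist `a ∈ {1,…,p−1}` and `j ∈ ℕ` with
`r ≤ a·p^j − 1 ≤ ℓ` (`p` prime, `0 < r ≤ ℓ`), then no zero column of the mod-`p`
Pascal triangle with respect to `ℓ` exists: for every `t < r` there is `ν` with
`t < ν ≤ ℓ` and `C(ν, t) ≢ 0 (mod p)`. -/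
theorem no_zero_column_of_apj {p r ℓ : ℕ} (hp : p.Prime)
    (hr : 0 < r) (hrℓ : r ≤ ℓ)
    (h : ∃ a j : ℕ, 1 ≤ a ∧ a ≤ p - 1 ∧ r ≤ a * p ^ j - 1 ∧ a * p ^ j - 1 ≤ ℓ) :
    ∀ t : ℕ, t < r → ∃ ν : ℕ, t < ν ∧ ν ≤ ℓ ∧ ¬ (p ∣ Nat.choose ν t) := by
  obtain ⟨a, j, ha1, ha2, hrν, hνℓ⟩ := h
  have hp2 : 2 ≤ p := hp.two_le
  intro t ht
  set ν := a * p ^ j - 1 with hν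
  refine ⟨ν, by omega, hνℓ, ?_⟩
  haveI : Fact p.Prime := ⟨hp⟩
  -- Lucas decomposition
  have lucas := Choose.choose_modEq_choose_mul_prod_range_choose (p := p) (n := ν) (k := t) j
  have hppos : ∀ i : ℕ, 1 ≤ p ^ i := fun i => Nat.one_le_pow _ _ (by omega)
  -- ν / p ^ j = a - 1
  have hdivj : ν / p ^ j = a - 1 := (div_mod_aux ha1 (hppos j)).1
  -- ν / p ^ i % p = p - 1 for i < j
  have hdivi : ∀ i : ℕ, i < j → ν / p ^ i % p = p - 1 := by
    intro i hi
    have hfac : a * p ^ j = (a * p ^ (j - i - 1) * p) * p ^ i := by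
      rw [mul_assoc, mul_assoc, ← pow_succ', ← pow_add]
      congr 2
      omega
    have hb1 : 1 ≤ a * p ^ (j - i - 1) * p :=
      Nat.one_le_iff_ne_zero.mpr (by positivity)
    have h1 : ν / p ^ i = a * p ^ (j - i - 1) * p - 1 := by
      rw [hν, hfac]
      exact (div_mod_aux hb1 (hppos i)).1
    rw [h1]
    exact (div_mod_aux (Nat.one_le_iff_ne_zero.mpr (by positivity)) (by omega)).2
  -- t / p ^ j ≤ a - 1
  have htν : t ≤ ν := by omega
  have htj : t / p ^ j ≤ a - 1 := hdivj ▸ Nat.div_le_div_right htν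
  -- each factor is not divisible by p
  have htop : ¬ p ∣ Nat.choose (ν / p ^ j) (t / p ^ j) := by
    rw [hdivj]
    exact not_dvd_choose_of_lt hp (by omega) htj
  have hfactor : ∀ i ∈ Finset.range j,
      ¬ p ∣ Nat.choose (ν / p ^ i % p) (t / p ^ i % p) := by
    intro i hi
    rw [hdivi i (Finset.mem_range.mp hi)]
    have : t / p ^ i % p < p := Nat.mod_lt _ (by omega)
    exact not_dvd_choose_of_lt hp (by omega) (by omega)
  -- convert ZMOD congruence to divisibility
  intro hdvd
  have hdvdZ : (p : ℤ) ∣ (Nat.choose ν t : ℤ) := Int.natCast_dvd_natCast.mpr hdvd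
  have hsub := Int.ModEq.dvd lucas
  have hdvdRHS : (p : ℤ) ∣ ((Nat.choose (ν / p ^ j) (t / p ^ j) : ℤ) *
      ((∏ i ∈ Finset.range j, Nat.choose (ν / p ^ i % p) (t / p ^ i % p) : ℕ) : ℤ)) := by
    have := dvd_add hsub hdvdZ
    simpa using this
  have hdvdN : p ∣ Nat.choose (ν / p ^ j) (t / p ^ j) *
      ∏ i ∈ Finset.range j, Nat.choose (ν / p ^ i % p) (t / p ^ i % p) := by
    rw [← Int.natCast_dvd_natCast]
    push_cast
    push_cast at hdvdRHS
    exact hdvdRHS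
  rcases (Nat.Prime.dvd_mul hp).mp hdvdN with h1 | h2
  · exact htop h1
  · obtain ⟨i, hi, hdvdi⟩ := (hp.prime.dvd_finset_prod_iff _).mp h2
    exact hfactor i hi hdvdi
end

section
/- Let p be a prime and let r, ℓ be positive integers with r ≤ ℓ. If a maximal zero column t_0 of the mod-p Pascal triangle with respect to ℓ exists, then the set R_0 of all zero columns with resolvable spoilers equals {t ∈ ℕ : t < r and C(ℓ', t) ≡ 0 (mod p) for every ℓ' with t_0 + 1 ≤ ℓ' ≤ ℓ}. If no zero column exists, then R_0 = ∅. -/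
/-!
A column `ν` with resolvable spoilers satisfies `ν ≤ t` for some zero column `t < r`:
follow spoilers upward until a column without spoilers, i.e. a zero column, is reached. Hence, under the maximal zero column `t0`, every row `ℓ' ∈ (t0, ℓ]` vanishes on `ν`, as such a
row would otherwise be a spoiler above `t0`. Conversely, if those rows vanish on `ν`, a spoiler
`t` of `ν` satisfies `t ≤ t0`, and `C(ℓ', t) C(t, ν) = C(ℓ', ν) C(ℓ' - ν, t - ν)` together with
`p ∤ C(t, ν)` shows that the same rows vanish on `t`, so the recursion closes.
-/

theorem Nat.Prime.dvd_choose_of_dvd_choose_of_not_dvd {p m t ν : ℕ} (hp : p.Prime)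
    (hνt : ν ≤ t) (hm : p ∣ m.choose ν) (ht : ¬ p ∣ t.choose ν) : p ∣ m.choose t := by
  have hdvd : p ∣ m.choose t * t.choose ν := by
    rw [Nat.choose_mul hνt]
    exact hm.mul_right _
  exact (hp.dvd_mul.1 hdvd).resolve_right ht

namespace ZCRS

variable {p r ℓ : ℕ}

theorem lt_s9 {ν : ℕ} (h : ZCRS p r ℓ ν) : ν < r := by
  rw [ZCRS] at h
  exact h.1

theorem of_spoiler {ν : ℕ} (h : ZCRS p r ℓ ν) {t : ℕ} (hνt : ν < t) (htℓ : t ≤ ℓ)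
    (hspoil : ¬ p ∣ t.choose ν) : ZCRS p r ℓ t := by
  rw [ZCRS] at h
  exact h.2 t hνt htℓ hspoil

theorem exists_zeroColumn_ge {ν : ℕ} (h : ZCRS p r ℓ ν) :
    ∃ t, ν ≤ t ∧ t < r ∧ ZeroColumn p ℓ t := by
  by_cases hs : ∃ t, ν < t ∧ t ≤ ℓ ∧ ¬ p ∣ t.choose ν
  · obtain ⟨t, hνt, htℓ, hspoil⟩ := hs
    obtain ⟨c, htc, hc⟩ := (h.of_spoiler hνt htℓ hspoil).exists_zeroColumn_ge
    exact ⟨c, by omega, hc⟩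
  · push Not at hs
    exact ⟨ν, le_rfl, h.lt_s9, hs⟩
termination_by ℓ - ν

theorem le_of_maximal {t0 ν : ℕ} (hmax : ∀ t, t < r → ZeroColumn p ℓ t → t ≤ t0)
    (h : ZCRS p r ℓ ν) : ν ≤ t0 := by
  obtain ⟨t, hνt, htr, ht⟩ := h.exists_zeroColumn_ge
  exact hνt.trans (hmax t htr ht)

theorem dvd_choose {t0 ν : ℕ} (hmax : ∀ t, t < r → ZeroColumn p ℓ t → t ≤ t0)
    (h : ZCRS p r ℓ ν) {ℓ' : ℕ} (ht0 : t0 < ℓ') (hℓ' : ℓ' ≤ ℓ) : p ∣ ℓ'.choose ν := by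
  have hν : ν ≤ t0 := h.le_of_maximal hmax
  by_contra hspoil
  have := (h.of_spoiler (by omega) hℓ' hspoil).le_of_maximal hmax
  omega

theorem of_dvd_choose {t0 ν : ℕ} (hp : p.Prime) (ht0r : t0 < r) (hν : ν < r)
    (hdvd : ∀ ℓ', t0 < ℓ' → ℓ' ≤ ℓ → p ∣ ℓ'.choose ν) : ZCRS p r ℓ ν := by
  rw [ZCRS]
  refine ⟨hν, fun t hνt htℓ hspoil => ?_⟩
  have htt0 : t ≤ t0 := by
    by_contra! h
    exact hspoil (hdvd t h htℓ)
  exact of_dvd_choose hp ht0r (by omega) fun ℓ' ht0 hℓ' =>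
    hp.dvd_choose_of_dvd_choose_of_not_dvd hνt.le (hdvd ℓ' ht0 hℓ') hspoil
termination_by ℓ - ν

end ZCRS

theorem zero_columns_with_resolvable_spoilers_general {p r ℓ : ℕ} (hp : p.Prime) :
    (∀ t0 : ℕ, t0 < r → ZeroColumn p ℓ t0 →
      (∀ t : ℕ, t < r → ZeroColumn p ℓ t → t ≤ t0) →
      ∀ ν : ℕ, ZCRS p r ℓ ν ↔
        (ν < r ∧ ∀ ℓ' : ℕ, t0 + 1 ≤ ℓ' → ℓ' ≤ ℓ → p ∣ Nat.choose ℓ' ν)) ∧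
    ((¬ ∃ t : ℕ, t < r ∧ ZeroColumn p ℓ t) → ∀ ν : ℕ, ¬ ZCRS p r ℓ ν) := by
  refine ⟨fun t0 ht0r _ hmax ν => ⟨fun h => ⟨h.lt_s9, fun _ => h.dvd_choose hmax⟩, ?_⟩, ?_⟩
  · rintro ⟨hν, hdvd⟩
    exact ZCRS.of_dvd_choose hp ht0r hν hdvd
  · rintro hnone ν h
    obtain ⟨t, -, htr, ht⟩ := h.exists_zeroColumn_ge
    exact hnone ⟨t, htr, ht⟩

/-- if a maximal zero column `t0` exists, then the set `R_0` of zero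
columns with resolvable spoilers equals
`{t : t < r ∧ ∀ ℓ' ∈ [t0+1, ℓ], C(ℓ', t) ≡ 0 (mod p)}`;
if no zero column exists, then `R_0 = ∅`. -/
theorem zero_columns_with_resolvable_spoilers {p r ℓ : ℕ} (hp : p.Prime)
    (hr : 0 < r) (hrℓ : r ≤ ℓ) :
    (∀ t0 : ℕ, t0 < r → ZeroColumn p ℓ t0 →
      (∀ t : ℕ, t < r → ZeroColumn p ℓ t → t ≤ t0) →
      ∀ ν : ℕ, ZCRS p r ℓ ν ↔
        (ν < r ∧ ∀ ℓ' : ℕ, t0 + 1 ≤ ℓ' → ℓ' ≤ ℓ → p ∣ Nat.choose ℓ' ν)) ∧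
    ((¬ ∃ t : ℕ, t < r ∧ ZeroColumn p ℓ t) → ∀ ν : ℕ, ¬ ZCRS p r ℓ ν) :=
  zero_columns_with_resolvable_spoilers_general hp
end
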